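/- Let ρ, ρ_d : ℝ → Matrix (Fin n) (Fin n) ℂ be differentiable and satisfy ρ'(t) = −i[H₀ + f(t)·H₁, ρ(t)] and ρ_d'(t) = −i[H₀, ρ_d(t)], where f(t) = κ·Re(Tr([−iH₁, ρ(t)]·ρ_d(t))) with κ > 0, and suppose ρ(0), ρ_d(0) are Hermitian. Then for every T ≥ 0, ∫₀ᵀ f(t)² dt = κ·(V(0) − V(T)) ≤ κ·V(0), where V(t) = ½ Re(Tr((ρ(t) − ρ_d(t))²)); in particular t ↦ f(t)² is integrable on [0,∞). -/

import Mathlib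

/-!
With `D = ρ - ρ_d` one has `D' = -i[H₀, D] - i f [H₁, ρ]`. Since `Tr([A, X] X) = 0`, the drift
drops out of `d/dt Tr(D²) = 2 Tr(D' D)`, and so does the `ρ`-part of the control term, leaving
`V' = -f · Re Tr(-i[H₁, ρ] ρ_d) = -f² / κ`; integrating gives the identity.
Both flows preserve Hermiticity: `E = X - Xᴴ` obeys the same equation, which conserves
`Tr(E²) = -Tr(Eᴴ E)`. Hence `V = ½ Tr(Dᴴ D) ≥ 0`, which gives the bound and, `f²` being
nonnegative, integrability on `[0, ∞)`.
-/

open Matrix Complex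

open scoped ComplexOrder

namespace Matrix

variable {ι : Type*}

theorem continuous_of_hasDerivAt_apply {E : Type*} [NormedAddCommGroup E] [NormedSpace ℝ E]
    {X : ℝ → Matrix ι ι E} {X' : ℝ → Matrix ι ι E}
    (hX : ∀ t i j, HasDerivAt (fun s => X s i j) (X' t i j) t) : Continuous X :=
  continuous_matrix fun i j => continuous_iff_continuousAt.2 fun t => (hX t i j).continuousAt

theorem hasDerivAt_conjTranspose_apply {X : ℝ → Matrix ι ι ℂ} {X' : Matrix ι ι ℂ} {t : ℝ}
    (hX : ∀ i j, HasDerivAt (fun s => X s i j) (X' i j) t) (i j : ι) :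
    HasDerivAt (fun s => (X s)ᴴ i j) (X'ᴴ i j) t :=
  (hX j i).star

variable [Fintype ι]

theorem trace_commutator_mul_self {R : Type*} [CommRing R] (A X : Matrix ι ι R) :
    trace ((A * X - X * A) * X) = 0 := by
  rw [Matrix.sub_mul, trace_sub, trace_mul_cycle A X X, sub_self]

theorem trace_lyapunov_deriv {R : Type*} [CommRing R] (a c : R) {H₀ H₁ ρ σ D' : Matrix ι ι R}
    (hD' : D' = a • ((H₀ + c • H₁) * ρ - ρ * (H₀ + c • H₁)) - a • (H₀ * σ - σ * H₀)) :
    trace (D' * (ρ - σ) + (ρ - σ) * D') = -2 * c * trace ((a • (H₁ * ρ - ρ * H₁)) * σ) := by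
  replace hD' : D' = a • ((H₀ * (ρ - σ) - (ρ - σ) * H₀)) + (a * c) • (H₁ * ρ - ρ * H₁) := by
    simp only [hD', Matrix.add_mul, Matrix.mul_add, Matrix.sub_mul, Matrix.mul_sub, Matrix.smul_mul,
      Matrix.mul_smul]
    module
  have hρσ : trace ((H₁ * ρ - ρ * H₁) * (ρ - σ)) = -trace ((H₁ * ρ - ρ * H₁) * σ) := by
    rw [Matrix.mul_sub, trace_sub, trace_commutator_mul_self, zero_sub]
  rw [trace_add, trace_mul_comm (ρ - σ), hD', Matrix.add_mul, trace_add, Matrix.smul_mul,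
    Matrix.smul_mul, trace_smul, trace_smul, trace_commutator_mul_self, hρσ, Matrix.smul_mul,
    trace_smul, smul_eq_mul, smul_eq_mul, smul_eq_mul]
  ring

theorem hasDerivAt_trace_mul {𝔸 : Type*} [NormedRing 𝔸] [NormedAlgebra ℝ 𝔸]
    {X Y : ℝ → Matrix ι ι 𝔸} {X' Y' : Matrix ι ι 𝔸} {t : ℝ}
    (hX : ∀ i j, HasDerivAt (fun s => X s i j) (X' i j) t)
    (hY : ∀ i j, HasDerivAt (fun s => Y s i j) (Y' i j) t) :
    HasDerivAt (fun s => trace (X s * Y s)) (trace (X' * Y t + X t * Y')) t := by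
  simp only [trace, diag, mul_apply, add_apply, ← Finset.sum_add_distrib]
  exact HasDerivAt.fun_sum fun i _ => HasDerivAt.fun_sum fun k _ => (hX i k).mul (hY k i)

theorem IsHermitian.conjTranspose_smul_I_commutator {H : Matrix ι ι ℂ} (hH : H.IsHermitian)
    (X : Matrix ι ι ℂ) : ((-I) • (H * X - X * H))ᴴ = (-I) • (H * Xᴴ - Xᴴ * H) := by
  simp only [conjTranspose_smul, conjTranspose_sub, conjTranspose_mul, hH.eq, star_neg,
    Complex.star_def, Complex.conj_I]
  module

theorem trace_mul_self_eq_of_hasDerivAt_commutator {A X : ℝ → Matrix ι ι ℂ} (c : ℂ)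
    (hX : ∀ t i j, HasDerivAt (fun s => X s i j) ((c • (A t * X t - X t * A t)) i j) t)
    (t : ℝ) : trace (X t * X t) = trace (X 0 * X 0) := by
  have hderiv : ∀ t, HasDerivAt (fun s => trace (X s * X s)) 0 t := by
    intro t
    refine (hasDerivAt_trace_mul (hX t) (hX t)).congr_deriv ?_
    rw [trace_add, trace_mul_comm (X t), ← two_mul, Matrix.smul_mul, trace_smul,
      trace_commutator_mul_self, smul_zero, mul_zero]
  exact is_const_of_deriv_eq_zero (fun s => (hderiv s).differentiableAt)
    (fun s => (hderiv s).deriv) t 0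

theorem isHermitian_of_hasDerivAt_commutator {H X : ℝ → Matrix ι ι ℂ}
    (hH : ∀ t, (H t).IsHermitian)
    (hX : ∀ t i j, HasDerivAt (fun s => X s i j) (((-I) • (H t * X t - X t * H t)) i j) t)
    (hX0 : (X 0).IsHermitian) (t : ℝ) : (X t).IsHermitian := by
  set E : ℝ → Matrix ι ι ℂ := fun s => X s - (X s)ᴴ with hE_def
  have hE : ∀ t i j, HasDerivAt (fun s => E s i j) (((-I) • (H t * E t - E t * H t)) i j) t := by
    intro t i j
    have h : HasDerivAt (fun s => E s i j) _ t :=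
      (hX t i j).sub (hasDerivAt_conjTranspose_apply (hX t) i j)
    rw [(hH t).conjTranspose_smul_I_commutator] at h
    refine h.congr_deriv ?_
    simp only [hE_def, Matrix.mul_sub, Matrix.sub_mul, smul_sub, sub_apply]
    abel
  have hE_skew : (E t)ᴴ = -E t := by
    simp only [hE_def, conjTranspose_sub, conjTranspose_conjTranspose, neg_sub]
  have hE0 : E 0 = 0 := sub_eq_zero.2 hX0.eq.symm
  have hEt : E t = 0 := by
    rw [← trace_conjTranspose_mul_self_eq_zero_iff, hE_skew, Matrix.neg_mul, trace_neg,
      trace_mul_self_eq_of_hasDerivAt_commutator _ hE, hE0, Matrix.zero_mul, trace_zero, neg_zero]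
  exact (sub_eq_zero.1 hEt).symm

theorem IsHermitian.re_trace_mul_self_nonneg {𝕜 : Type*} [RCLike 𝕜] {D : Matrix ι ι 𝕜}
    (hD : D.IsHermitian) : 0 ≤ RCLike.re (trace (D * D)) := by
  have h := (posSemidef_conjTranspose_mul_self D).trace_nonneg
  rw [hD.eq] at h
  exact (RCLike.nonneg_iff.1 h).1

end Matrix

section Lyapunov

variable {ι : Type*} [Fintype ι] [DecidableEq ι]

theorem hasDerivAt_half_re_trace_sq_sub {H₀ H₁ : Matrix ι ι ℂ} {ρ σ : ℝ → Matrix ι ι ℂ} {c t : ℝ}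
    (hρ : ∀ i j, HasDerivAt (fun s => ρ s i j)
      (((-I) • ((H₀ + (c : ℂ) • H₁) * ρ t - ρ t * (H₀ + (c : ℂ) • H₁))) i j) t)
    (hσ : ∀ i j, HasDerivAt (fun s => σ s i j) (((-I) • (H₀ * σ t - σ t * H₀)) i j) t) :
    HasDerivAt (fun s => (1 / 2 : ℝ) * (trace ((ρ s - σ s) ^ 2)).re)
      (-c * (trace (((-I) • (H₁ * ρ t - ρ t * H₁)) * σ t)).re) t := by
  have hD : ∀ i j, HasDerivAt (fun s => (ρ s - σ s) i j)
      ((((-I) • ((H₀ + (c : ℂ) • H₁) * ρ t - ρ t * (H₀ + (c : ℂ) • H₁))) -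
        (-I) • (H₀ * σ t - σ t * H₀)) i j) t :=
    fun i j => (hρ i j).sub (hσ i j)
  have h := (reCLM.hasFDerivAt.comp_hasDerivAt t (hasDerivAt_trace_mul hD hD)).const_mul (1 / 2 : ℝ)
  simp only [sq]
  refine h.congr_deriv ?_
  rw [reCLM_apply, trace_lyapunov_deriv _ _ rfl, ← ofReal_ofNat, ← ofReal_neg,
    ← ofReal_mul, re_ofReal_mul]
  ring

end Lyapunov

theorem MeasureTheory.integrableOn_Ici_of_intervalIntegral_le {g : ℝ → ℝ} {a C : ℝ}
    (hg : Continuous g) (hg_nonneg : ∀ t, 0 ≤ g t) (hC : ∀ T, a ≤ T → ∫ t in a..T, g t ≤ C) :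
    IntegrableOn g (Set.Ici a) := by
  rw [integrableOn_Ici_iff_integrableOn_Ioi]
  refine integrableOn_Ioi_of_intervalIntegral_norm_bounded C a (fun _ => hg.integrableOn_Ioc)
    (Filter.tendsto_atTop_add_const_left _ a tendsto_natCast_atTop_atTop)
    (Filter.Eventually.of_forall fun N => ?_)
  simp only [Real.norm_of_nonneg (hg_nonneg _)]
  exact hC _ (le_add_of_nonneg_right N.cast_nonneg)

theorem stmt2_general {n : ℕ} (H₀ H₁ : Matrix (Fin n) (Fin n) ℂ)
    (hH₀ : H₀.IsHermitian) (hH₁ : H₁.IsHermitian)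
    (κ : ℝ) (hκ : 0 < κ)
    (ρ ρd : ℝ → Matrix (Fin n) (Fin n) ℂ)
    (f : ℝ → ℝ)
    (hf : ∀ t, f t =
      κ * (Matrix.trace (((-Complex.I) • (H₁ * ρ t - ρ t * H₁)) * ρd t)).re)
    (hρ : ∀ t, ∀ i j : Fin n, HasDerivAt (fun s => ρ s i j)
      (((-Complex.I) • ((H₀ + (f t : ℂ) • H₁) * ρ t - ρ t * (H₀ + (f t : ℂ) • H₁))) i j) t)
    (hρd : ∀ t, ∀ i j : Fin n, HasDerivAt (fun s => ρd s i j)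
      (((-Complex.I) • (H₀ * ρd t - ρd t * H₀)) i j) t)
    (hρ0 : (ρ 0).IsHermitian) (hρd0 : (ρd 0).IsHermitian)
    (V : ℝ → ℝ)
    (hV : ∀ t, V t = (1 / 2 : ℝ) * (Matrix.trace ((ρ t - ρd t) ^ 2)).re) :
    (∀ T : ℝ, 0 ≤ T →
      (∫ t in (0 : ℝ)..T, (f t) ^ 2) = κ * (V 0 - V T) ∧
      (∫ t in (0 : ℝ)..T, (f t) ^ 2) ≤ κ * V 0) ∧
    MeasureTheory.IntegrableOn (fun t => (f t) ^ 2) (Set.Ici (0 : ℝ)) := by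
  set g : ℝ → ℝ := fun t => (trace (((-I) • (H₁ * ρ t - ρ t * H₁)) * ρd t)).re
  have hg : Continuous g := by
    have hρ_cont := continuous_of_hasDerivAt_apply hρ
    have hρd_cont := continuous_of_hasDerivAt_apply hρd
    fun_prop
  have hf_sq : ∀ t, f t ^ 2 = κ * (f t * g t) := fun t => by rw [sq, hf t]; ring
  have hf_cont : Continuous f := by rw [funext hf]; exact continuous_const.mul hg
  have hV_deriv : ∀ t, HasDerivAt V (-(f t * g t)) t := fun t => by
    simpa only [funext hV, neg_mul] using hasDerivAt_half_re_trace_sq_sub (hρ t) (hρd t)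
  have hV_nonneg : ∀ t, 0 ≤ V t := fun t => by
    have hH : ∀ s, (H₀ + (f s : ℂ) • H₁).IsHermitian :=
      fun s => hH₀.add (hH₁.smul (Complex.conj_ofReal (f s)))
    have hρ_herm := isHermitian_of_hasDerivAt_commutator hH hρ hρ0 t
    have hρd_herm := isHermitian_of_hasDerivAt_commutator (fun _ => hH₀) hρd hρd0 t
    rw [hV t, sq]
    exact mul_nonneg (by norm_num) (hρ_herm.sub hρd_herm).re_trace_mul_self_nonneg
  have h_integral : ∀ T, ∫ t in (0 : ℝ)..T, f t ^ 2 = κ * (V 0 - V T) := fun T => by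
    simp only [hf_sq, intervalIntegral.integral_const_mul]
    rw [← neg_sub, ← intervalIntegral.integral_eq_sub_of_hasDerivAt (fun t _ => hV_deriv t)
      ((hf_cont.mul hg).neg.intervalIntegrable 0 T), intervalIntegral.integral_neg, neg_neg]
  have h_bound : ∀ T, ∫ t in (0 : ℝ)..T, f t ^ 2 ≤ κ * V 0 := fun T => by
    rw [h_integral]
    exact mul_le_mul_of_nonneg_left (by linarith [hV_nonneg T]) hκ.le
  exact ⟨fun T _ => ⟨h_integral T, h_bound T⟩, MeasureTheory.integrableOn_Ici_of_intervalIntegral_le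
    (hf_cont.pow 2) (fun t => sq_nonneg (f t)) fun T _ => h_bound T⟩

/-- With the Lyapunov feedback law and Hermitian initial conditions,
for every `T ≥ 0` one has `∫₀ᵀ f(t)² dt = κ (V(0) - V(T)) ≤ κ V(0)`, where
`V(t) = ½ Re Tr((ρ(t) - ρ_d(t))²)`; in particular `t ↦ f(t)²` is integrable on `[0,∞)`. -/
theorem stmt2 {n : ℕ} (hn : 2 ≤ n) (H₀ H₁ : Matrix (Fin n) (Fin n) ℂ)
    (hH₀ : H₀.IsHermitian) (hH₁ : H₁.IsHermitian)
    (κ : ℝ) (hκ : 0 < κ)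
    (ρ ρd : ℝ → Matrix (Fin n) (Fin n) ℂ)
    (f : ℝ → ℝ)
    (hf : ∀ t, f t =
      κ * (Matrix.trace (((-Complex.I) • (H₁ * ρ t - ρ t * H₁)) * ρd t)).re)
    (hρ : ∀ t, ∀ i j : Fin n, HasDerivAt (fun s => ρ s i j)
      (((-Complex.I) • ((H₀ + (f t : ℂ) • H₁) * ρ t - ρ t * (H₀ + (f t : ℂ) • H₁))) i j) t)
    (hρd : ∀ t, ∀ i j : Fin n, HasDerivAt (fun s => ρd s i j)
      (((-Complex.I) • (H₀ * ρd t - ρd t * H₀)) i j) t)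
    (hρ0 : (ρ 0).IsHermitian) (hρd0 : (ρd 0).IsHermitian)
    (V : ℝ → ℝ)
    (hV : ∀ t, V t = (1 / 2 : ℝ) * (Matrix.trace ((ρ t - ρd t) ^ 2)).re) :
    (∀ T : ℝ, 0 ≤ T →
      (∫ t in (0 : ℝ)..T, (f t) ^ 2) = κ * (V 0 - V T) ∧
      (∫ t in (0 : ℝ)..T, (f t) ^ 2) ≤ κ * V 0) ∧
    MeasureTheory.IntegrableOn (fun t => (f t) ^ 2) (Set.Ici (0 : ℝ)) :=
  stmt2_general H₀ H₁ hH₀ hH₁ κ hκ ρ ρd f hf hρ hρd hρ0 hρd0 V hV
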